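/- arXiv:1508.01818 — 3 statements merged into one kernel-verified Lean document; each statement's English description precedes it below -/
import Mathlib

section
/- The set Φ_HP = { p ∈ [0,1] : V(p) = HP-value(p) }, i.e. the set of beliefs at which offering the high-privacy coupon is optimal, is a convex subset of [0,1]. -/
/-- Two-state consumer model: transition probabilities `lNA ≤ lAA`, costs
`CHN ≤ CL ≤ CHA`, discount factor `β ∈ (0,1)`. -/
structure CouponModel where
  lNA : ℝ
  lAA : ℝ
  CHN : ℝ
  CL : ℝ
  CHA : ℝ
  β : ℝ
  lNA_nonneg : 0 ≤ lNA
  lNA_le_lAA : lNA ≤ lAA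
  lAA_le_one : lAA ≤ 1
  CHN_le_CL : CHN ≤ CL
  CL_le_CHA : CL ≤ CHA
  β_pos : 0 < β
  β_lt_one : β < 1

namespace CouponModel

/-- Belief-update map `T(p) = (1-p)·λNA + p·λAA`. -/
noncomputable def T (M : CouponModel) (p : ℝ) : ℝ := (1 - p) * M.lNA + p * M.lAA

/-- Bellman operator. -/
noncomputable def B (M : CouponModel) (f : ℝ → ℝ) (p : ℝ) : ℝ :=
  min (M.CL + M.β * f (M.T p))
    ((1 - p) * M.CHN + p * M.CHA + M.β * ((1 - p) * f M.lNA + p * f M.lAA))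

/-- A function `f : ℝ → ℝ` is bounded on the belief space `[0,1]`. -/
def IsBdd (f : ℝ → ℝ) : Prop := ∃ C : ℝ, ∀ p ∈ Set.Icc (0:ℝ) 1, |f p| ≤ C

/-- `V` is a bounded fixed point of the Bellman operator on `[0,1]`. -/
def IsValue (M : CouponModel) (V : ℝ → ℝ) : Prop :=
  IsBdd V ∧ ∀ p ∈ Set.Icc (0:ℝ) 1, V p = M.B V p

/-- Value of offering the low-privacy coupon at belief `p`. -/
noncomputable def LPval (M : CouponModel) (V : ℝ → ℝ) (p : ℝ) : ℝ :=
  M.CL + M.β * V (M.T p)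

/-- Value of offering the high-privacy coupon at belief `p`. -/
noncomputable def HPval (M : CouponModel) (V : ℝ → ℝ) (p : ℝ) : ℝ :=
  (1 - p) * M.CHN + p * M.CHA + M.β * ((1 - p) * V M.lNA + p * V M.lAA)

/-- `τ` is a threshold for `V`: HP is optimal below `τ`, LP is optimal above `τ`. -/
def IsThreshold (M : CouponModel) (V : ℝ → ℝ) (τ : ℝ) : Prop :=
  τ ∈ Set.Icc (0:ℝ) 1 ∧
    (∀ p ∈ Set.Icc (0:ℝ) τ, V p = M.HPval V p) ∧
    (∀ p ∈ Set.Icc τ (1:ℝ), V p = M.LPval V p)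

end CouponModel

namespace CouponModel

lemma T_mem (M : CouponModel) {p : ℝ} (hp : p ∈ Set.Icc (0:ℝ) 1) :
    M.T p ∈ Set.Icc (0:ℝ) 1 := by
  obtain ⟨h0, h1⟩ := hp
  have h2 := M.lNA_nonneg
  have h3 := M.lNA_le_lAA
  have h4 := M.lAA_le_one
  constructor <;> [skip; skip] <;> simp only [T] <;> nlinarith

lemma lNA_mem (M : CouponModel) : M.lNA ∈ Set.Icc (0:ℝ) 1 :=
  ⟨M.lNA_nonneg, M.lNA_le_lAA.trans M.lAA_le_one⟩

lemma lAA_mem (M : CouponModel) : M.lAA ∈ Set.Icc (0:ℝ) 1 :=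
  ⟨M.lNA_nonneg.trans M.lNA_le_lAA, M.lAA_le_one⟩

lemma T_affine (M : CouponModel) (p q a b : ℝ) (hab : a + b = 1) :
    M.T (a * p + b * q) = a * M.T p + b * M.T q := by
  simp only [T]; linear_combination (-M.lNA) * hab

/-- iterates of the Bellman operator starting from 0 -/
noncomputable def iterV (M : CouponModel) : ℕ → ℝ → ℝ
  | 0 => fun _ => 0
  | n + 1 => M.B (M.iterV n)

lemma iterV_concave (M : CouponModel) (n : ℕ) :
    ∀ p ∈ Set.Icc (0:ℝ) 1, ∀ q ∈ Set.Icc (0:ℝ) 1, ∀ a b : ℝ,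
      0 ≤ a → 0 ≤ b → a + b = 1 →
      a * M.iterV n p + b * M.iterV n q ≤ M.iterV n (a * p + b * q) := by
  induction n with
  | zero => intro p _ q _ a b _ _ _; simp [iterV]
  | succ n ih =>
    intro p hp q hq a b ha hb hab
    simp only [iterV, B]
    refine le_min ?_ ?_
    · have h1 : a * M.iterV n (M.T p) + b * M.iterV n (M.T q) ≤
          M.iterV n (a * M.T p + b * M.T q) :=
        ih _ (M.T_mem hp) _ (M.T_mem hq) a b ha hb hab
      rw [← M.T_affine p q a b hab] at h1
      have h2 : a * min (M.CL + M.β * M.iterV n (M.T p))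
            ((1 - p) * M.CHN + p * M.CHA +
              M.β * ((1 - p) * M.iterV n M.lNA + p * M.iterV n M.lAA))
          + b * min (M.CL + M.β * M.iterV n (M.T q))
            ((1 - q) * M.CHN + q * M.CHA +
              M.β * ((1 - q) * M.iterV n M.lNA + q * M.iterV n M.lAA))
          ≤ a * (M.CL + M.β * M.iterV n (M.T p)) + b * (M.CL + M.β * M.iterV n (M.T q)) :=
        add_le_add (mul_le_mul_of_nonneg_left (min_le_left _ _) ha)
          (mul_le_mul_of_nonneg_left (min_le_left _ _) hb)
      refine h2.trans ?_
      have heq : a * (M.CL + M.β * M.iterV n (M.T p)) + b * (M.CL + M.β * M.iterV n (M.T q))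
          = M.CL + M.β * (a * M.iterV n (M.T p) + b * M.iterV n (M.T q)) := by
        linear_combination M.CL * hab
      rw [heq]
      have := mul_le_mul_of_nonneg_left h1 M.β_pos.le
      linarith
    · have h2 : a * min (M.CL + M.β * M.iterV n (M.T p))
            ((1 - p) * M.CHN + p * M.CHA +
              M.β * ((1 - p) * M.iterV n M.lNA + p * M.iterV n M.lAA))
          + b * min (M.CL + M.β * M.iterV n (M.T q))
            ((1 - q) * M.CHN + q * M.CHA +
              M.β * ((1 - q) * M.iterV n M.lNA + q * M.iterV n M.lAA))
          ≤ a * ((1 - p) * M.CHN + p * M.CHA +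
              M.β * ((1 - p) * M.iterV n M.lNA + p * M.iterV n M.lAA))
          + b * ((1 - q) * M.CHN + q * M.CHA +
              M.β * ((1 - q) * M.iterV n M.lNA + q * M.iterV n M.lAA)) :=
        add_le_add (mul_le_mul_of_nonneg_left (min_le_right _ _) ha)
          (mul_le_mul_of_nonneg_left (min_le_right _ _) hb)
      refine h2.trans (le_of_eq ?_)
      linear_combination (M.CHN + M.β * M.iterV n M.lNA) * hab

lemma contraction (M : CouponModel) (f g : ℝ → ℝ) (D : ℝ)
    (h : ∀ x ∈ Set.Icc (0:ℝ) 1, |f x - g x| ≤ D) :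
    ∀ p ∈ Set.Icc (0:ℝ) 1, |M.B f p - M.B g p| ≤ M.β * D := by
  intro p hp
  have hD : 0 ≤ D := (abs_nonneg _).trans (h 0 (by norm_num))
  refine (abs_min_sub_min_le_max _ _ _ _).trans (max_le ?_ ?_)
  · have : (M.CL + M.β * f (M.T p)) - (M.CL + M.β * g (M.T p))
        = M.β * (f (M.T p) - g (M.T p)) := by ring
    rw [this, abs_mul, abs_of_pos M.β_pos]
    exact mul_le_mul_of_nonneg_left (h _ (M.T_mem hp)) M.β_pos.le
  · have heq : ((1 - p) * M.CHN + p * M.CHA + M.β * ((1 - p) * f M.lNA + p * f M.lAA))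
        - ((1 - p) * M.CHN + p * M.CHA + M.β * ((1 - p) * g M.lNA + p * g M.lAA))
        = M.β * ((1 - p) * (f M.lNA - g M.lNA) + p * (f M.lAA - g M.lAA)) := by ring
    rw [heq, abs_mul, abs_of_pos M.β_pos]
    refine mul_le_mul_of_nonneg_left ?_ M.β_pos.le
    obtain ⟨h0, h1⟩ := hp
    calc |(1 - p) * (f M.lNA - g M.lNA) + p * (f M.lAA - g M.lAA)|
        ≤ |(1 - p) * (f M.lNA - g M.lNA)| + |p * (f M.lAA - g M.lAA)| := abs_add_le _ _
      _ = (1 - p) * |f M.lNA - g M.lNA| + p * |f M.lAA - g M.lAA| := by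
          rw [abs_mul, abs_mul, abs_of_nonneg (by linarith : (0:ℝ) ≤ 1 - p),
            abs_of_nonneg h0]
      _ ≤ (1 - p) * D + p * D :=
          add_le_add (mul_le_mul_of_nonneg_left (h _ M.lNA_mem) (by linarith))
            (mul_le_mul_of_nonneg_left (h _ M.lAA_mem) h0)
      _ = D := by ring

lemma iterV_approx (M : CouponModel) (V : ℝ → ℝ) (hV : M.IsValue V) (C : ℝ)
    (hC : ∀ p ∈ Set.Icc (0:ℝ) 1, |V p| ≤ C) :
    ∀ n : ℕ, ∀ p ∈ Set.Icc (0:ℝ) 1, |V p - M.iterV n p| ≤ M.β ^ n * C := by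
  intro n
  induction n with
  | zero => intro p hp; simpa [iterV] using hC p hp
  | succ n ih =>
    intro p hp
    have h1 : |M.B V p - M.B (M.iterV n) p| ≤ M.β * (M.β ^ n * C) :=
      M.contraction V (M.iterV n) (M.β ^ n * C) ih p hp
    calc |V p - M.iterV (n + 1) p| = |M.B V p - M.B (M.iterV n) p| := by
          rw [hV.2 p hp]; rfl
      _ ≤ M.β * (M.β ^ n * C) := h1
      _ = M.β ^ (n + 1) * C := by ring

lemma V_concave (M : CouponModel) (V : ℝ → ℝ) (hV : M.IsValue V) :
    ∀ p ∈ Set.Icc (0:ℝ) 1, ∀ q ∈ Set.Icc (0:ℝ) 1, ∀ a b : ℝ,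
      0 ≤ a → 0 ≤ b → a + b = 1 →
      a * V p + b * V q ≤ V (a * p + b * q) := by
  intro p hp q hq a b ha hb hab
  obtain ⟨C, hC⟩ := hV.1
  have hC0 : 0 ≤ C := (abs_nonneg _).trans (hC 0 (by norm_num))
  have hr : a * p + b * q ∈ Set.Icc (0:ℝ) 1 :=
    (convex_Icc (0:ℝ) 1) hp hq ha hb hab
  refine le_of_forall_pos_le_add fun ε hε => ?_
  -- choose n with 2 * β^n * C < ε
  have hβ0 := M.β_pos
  have hβ1 := M.β_lt_one
  obtain ⟨n, hn⟩ : ∃ n : ℕ, M.β ^ n * (2 * C) < ε := by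
    rcases eq_or_lt_of_le hC0 with hC' | hC'
    · exact ⟨0, by simpa [← hC'] using hε⟩
    · have h2C : (0:ℝ) < 2 * C := by linarith
      obtain ⟨n, hn⟩ := exists_pow_lt_of_lt_one (div_pos hε h2C) hβ1
      exact ⟨n, by rwa [lt_div_iff₀ h2C] at hn⟩
  have h1 := M.iterV_approx V hV C hC n p hp
  have h2 := M.iterV_approx V hV C hC n q hq
  have h3 := M.iterV_approx V hV C hC n _ hr
  have h4 := M.iterV_concave n p hp q hq a b ha hb hab
  have e1 : V p ≤ M.iterV n p + M.β ^ n * C := by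
    have := abs_le.mp h1; linarith [this.2]
  have e2 : V q ≤ M.iterV n q + M.β ^ n * C := by
    have := abs_le.mp h2; linarith [this.2]
  have e3 : M.iterV n (a * p + b * q) ≤ V (a * p + b * q) + M.β ^ n * C := by
    have := abs_le.mp h3; linarith [this.1]
  have hβn : 0 ≤ M.β ^ n := pow_nonneg hβ0.le n
  nlinarith [mul_le_mul_of_nonneg_left e1 ha, mul_le_mul_of_nonneg_left e2 hb]

end CouponModel

/-- The set of beliefs at which offering the high-privacy coupon is optimal
is a convex subset of `[0,1]`. -/
theorem hp_region_convex (M : CouponModel) (V : ℝ → ℝ) (hV : M.IsValue V) :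
    Convex ℝ {p ∈ Set.Icc (0:ℝ) 1 | V p = M.HPval V p} := by
  intro x hx y hy a b ha hb hab
  simp only [Set.mem_setOf_eq, smul_eq_mul] at hx hy ⊢
  obtain ⟨hxI, hxV⟩ := hx
  obtain ⟨hyI, hyV⟩ := hy
  have hrI : a * x + b * y ∈ Set.Icc (0:ℝ) 1 := (convex_Icc (0:ℝ) 1) hxI hyI ha hb hab
  refine ⟨hrI, ?_⟩
  have hVx_le : V x ≤ M.LPval V x := by
    rw [hV.2 x hxI]; exact min_le_left _ _
  have hVy_le : V y ≤ M.LPval V y := by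
    rw [hV.2 y hyI]; exact min_le_left _ _
  have haff : M.HPval V (a * x + b * y) = a * M.HPval V x + b * M.HPval V y := by
    simp only [CouponModel.HPval]
    linear_combination (-(M.CHN + M.β * V M.lNA)) * hab
  have hcon := M.V_concave V hV _ (M.T_mem hxI) _ (M.T_mem hyI) a b ha hb hab
  rw [← M.T_affine x y a b hab] at hcon
  have hle : a * V x + b * V y ≤ M.LPval V (a * x + b * y) := by
    have h1 : a * V x + b * V y ≤ a * M.LPval V x + b * M.LPval V y :=
      add_le_add (mul_le_mul_of_nonneg_left hVx_le ha)
        (mul_le_mul_of_nonneg_left hVy_le hb)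
    refine h1.trans ?_
    simp only [CouponModel.LPval]
    have heq : a * (M.CL + M.β * V (M.T x)) + b * (M.CL + M.β * V (M.T y))
        = M.CL + M.β * (a * V (M.T x) + b * V (M.T y)) := by
      linear_combination M.CL * hab
    rw [heq]
    have := mul_le_mul_of_nonneg_left hcon M.β_pos.le
    linarith
  have key : M.HPval V (a * x + b * y) ≤ M.LPval V (a * x + b * y) := by
    rw [haff, ← hxV, ← hyV]; exact hle
  rw [hV.2 _ hrI]
  simp only [CouponModel.B, CouponModel.LPval, CouponModel.HPval] at key ⊢
  exact min_eq_right key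
end

section
/- There exists τ ∈ [0,1] that is a threshold for V, i.e., V(p) = HP-value(p) for every p ∈ [0, τ] and V(p) = LP-value(p) for every p ∈ [τ, 1]. (Thus the optimal stationary policy offers a high-privacy coupon exactly when the belief of being Alerted is at most τ.) -/
/-!
Value iteration `B^[n] 0` preserves concavity and continuity on `[0,1]` (the LP branch is a
concave function precomposed with the affine map `T`, the HP branch is affine in `p`) and
converges uniformly to `V`, because `B` is a `β`-contraction. Hence `V` is concave and continuous,
so the advantage `HP-value − LP-value`, an affine function minus a concave one, is convex and
continuous; it equals `C_HN − C_L ≤ 0` at `p = 0` and `C_HA − C_L ≥ 0` at `p = 1`. Its sublevel set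
`{≤ 0}` is then an interval `[0, τ]`, and by the intermediate value theorem it is `≥ 0` on `[τ, 1]`.
-/

open Set Filter Topology AffineMap

section AffineMap

variable {𝕜 E β : Type*} [Ring 𝕜] [PartialOrder 𝕜] [AddCommGroup E] [Module 𝕜 E]
  [AddCommGroup β] [PartialOrder β] [Module 𝕜 β] (f : E →ᵃ[𝕜] β) {s : Set E}

theorem AffineMap.concaveOn (hs : Convex 𝕜 s) : ConcaveOn 𝕜 s f :=
  ⟨hs, fun _ _ _ _ _ _ _ _ hab => (Convex.combo_affine_apply hab).ge⟩

theorem AffineMap.convexOn (hs : Convex 𝕜 s) : ConvexOn 𝕜 s f :=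
  ⟨hs, fun _ _ _ _ _ _ _ _ hab => (Convex.combo_affine_apply hab).le⟩

end AffineMap

theorem ConcaveOn.of_tendsto {E ι : Type*} [AddCommGroup E] [Module ℝ E] {l : Filter ι}
    [l.NeBot] {F : ι → E → ℝ} {f : E → ℝ} {s : Set E} (hF : ∀ n, ConcaveOn ℝ s (F n))
    (hlim : ∀ x ∈ s, Tendsto (fun n => F n x) l (𝓝 (f x))) : ConcaveOn ℝ s f := by
  classical
  refine (isClosed_setOfPred_concaveOn.mem_of_tendsto (b := l)
    (f := fun n => s.piecewise (F n) f) ?_ ?_).congr (piecewise_eqOn s f f)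
  · refine tendsto_pi_nhds.2 fun x => ?_
    by_cases hx : x ∈ s
    · simpa [hx] using hlim x hx
    · simp [hx]
  · exact Eventually.of_forall fun n => (hF n).congr (piecewise_eqOn s _ _).symm

theorem ConvexOn.exists_sign_change {D : ℝ → ℝ} {a b : ℝ} (hab : a ≤ b)
    (hconv : ConvexOn ℝ (Icc a b) D) (hcont : ContinuousOn D (Icc a b))
    (ha : D a ≤ 0) (hb : 0 ≤ D b) :
    ∃ τ ∈ Icc a b, (∀ p ∈ Icc a τ, D p ≤ 0) ∧ ∀ p ∈ Icc τ b, 0 ≤ D p := by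
  set S := {p ∈ Icc a b | D p ≤ 0}
  have haS : a ∈ S := ⟨left_mem_Icc.2 hab, ha⟩
  have hS_bdd : BddAbove S := ⟨b, fun p hp => hp.1.2⟩
  have hτS : sSup S ∈ S :=
    (hcont.preimage_isClosed_of_isClosed isClosed_Icc isClosed_Iic).csSup_mem ⟨a, haS⟩ hS_bdd
  set τ := sSup S
  -- a zero of `D` on `[τ, b]` lies in `S`, so it can only be `τ` itself
  have hDτ : 0 ≤ D τ := by
    obtain ⟨c, hc, hDc⟩ := intermediate_value_Icc hτS.1.2
      (hcont.mono (Icc_subset_Icc hτS.1.1 le_rfl)) ⟨hτS.2, hb⟩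
    have hcτ : c ≤ τ := le_csSup hS_bdd ⟨⟨hτS.1.1.trans hc.1, hc.2⟩, hDc.le⟩
    rw [← le_antisymm hcτ hc.1, hDc]
  refine ⟨τ, hτS.1, fun p hp => ((hconv.convex_le 0).ordConnected.out haS hτS hp).2,
    fun p hp => ?_⟩
  obtain rfl | hτp := hp.1.eq_or_lt
  · exact hDτ
  · exact le_of_not_ge fun hDp =>
      hτp.not_ge (le_csSup hS_bdd ⟨⟨hτS.1.1.trans hp.1, hp.2⟩, hDp⟩)

namespace CouponModel

variable (M : CouponModel)

theorem lNA_mem_s6 : M.lNA ∈ Icc (0 : ℝ) 1 :=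
  ⟨M.lNA_nonneg, M.lNA_le_lAA.trans M.lAA_le_one⟩

theorem lAA_mem_s6 : M.lAA ∈ Icc (0 : ℝ) 1 :=
  ⟨M.lNA_nonneg.trans M.lNA_le_lAA, M.lAA_le_one⟩

theorem T_eq_lineMap : M.T = lineMap M.lNA M.lAA := by
  ext p
  rw [lineMap_apply_ring, T]

theorem mapsTo_T : MapsTo M.T (Icc 0 1) (Icc 0 1) := by
  rw [T_eq_lineMap]
  exact fun p hp => (convex_Icc 0 1).lineMap_mem M.lNA_mem_s6 M.lAA_mem_s6 hp

theorem HPval_eq_lineMap (f : ℝ → ℝ) :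
    M.HPval f = lineMap (M.CHN + M.β * f M.lNA) (M.CHA + M.β * f M.lAA) := by
  ext p
  rw [lineMap_apply_ring, HPval]
  ring

theorem B_eq_inf (f : ℝ → ℝ) : M.B f = M.LPval f ⊓ M.HPval f := rfl

theorem LPval_concaveOn {f : ℝ → ℝ} (hf : ConcaveOn ℝ (Icc 0 1) f) :
    ConcaveOn ℝ (Icc 0 1) (M.LPval f) := by
  have hfT : ConcaveOn ℝ (Icc 0 1) (f ∘ M.T) := by
    have hmaps := M.mapsTo_T
    rw [T_eq_lineMap] at hmaps ⊢
    exact (hf.comp_affineMap _).subset hmaps (convex_Icc 0 1)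
  refine ((hfT.smul M.β_pos.le).add_const M.CL).congr fun p _ => ?_
  simp only [Pi.add_apply, Function.comp_apply, smul_eq_mul, LPval]
  ring

theorem B_concaveOn {f : ℝ → ℝ} (hf : ConcaveOn ℝ (Icc 0 1) f) :
    ConcaveOn ℝ (Icc 0 1) (M.B f) := by
  rw [B_eq_inf, HPval_eq_lineMap]
  exact (M.LPval_concaveOn hf).inf (AffineMap.concaveOn _ (convex_Icc 0 1))

theorem B_continuous {f : ℝ → ℝ} (hf : Continuous f) : Continuous (M.B f) := by
  unfold B T
  fun_prop

theorem abs_B_sub_B_le {f g : ℝ → ℝ} {C : ℝ} (hfg : ∀ q ∈ Icc (0 : ℝ) 1, |f q - g q| ≤ C)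
    {p : ℝ} (hp : p ∈ Icc (0 : ℝ) 1) : |M.B f p - M.B g p| ≤ M.β * C := by
  have hβ := M.β_pos.le
  have hNA := hfg _ M.lNA_mem_s6
  have hAA := hfg _ M.lAA_mem_s6
  refine (abs_min_sub_min_le_max _ _ _ _).trans (max_le ?_ ?_)
  · rw [show M.CL + M.β * f (M.T p) - (M.CL + M.β * g (M.T p))
        = M.β * (f (M.T p) - g (M.T p)) by ring, abs_mul, abs_of_nonneg hβ]
    exact mul_le_mul_of_nonneg_left (hfg _ (M.mapsTo_T hp)) hβ
  · rw [show (1 - p) * M.CHN + p * M.CHA + M.β * ((1 - p) * f M.lNA + p * f M.lAA)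
        - ((1 - p) * M.CHN + p * M.CHA + M.β * ((1 - p) * g M.lNA + p * g M.lAA))
        = M.β * ((1 - p) * (f M.lNA - g M.lNA) + p * (f M.lAA - g M.lAA)) by ring,
      abs_mul, abs_of_nonneg hβ]
    refine mul_le_mul_of_nonneg_left ?_ hβ
    obtain ⟨hp0, hp1⟩ := hp
    rw [abs_le] at hNA hAA ⊢
    constructor <;> nlinarith

theorem HPval_sub_LPval_zero (f : ℝ → ℝ) : (M.HPval f - M.LPval f) 0 = M.CHN - M.CL := by
  simp only [Pi.sub_apply, HPval, LPval, T]
  ring_nf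

theorem HPval_sub_LPval_one (f : ℝ → ℝ) : (M.HPval f - M.LPval f) 1 = M.CHA - M.CL := by
  simp only [Pi.sub_apply, HPval, LPval, T]
  ring_nf

variable {M}

theorem IsValue.abs_iterate_B_sub_le {V : ℝ → ℝ} (hV : M.IsValue V) {C : ℝ}
    (hC : ∀ p ∈ Icc (0 : ℝ) 1, |V p| ≤ C) (n : ℕ) :
    ∀ p ∈ Icc (0 : ℝ) 1, |M.B^[n] 0 p - V p| ≤ M.β ^ n * C := by
  induction n with
  | zero => simpa [abs_sub_comm] using hC
  | succ n ih =>
    intro p hp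
    rw [Function.iterate_succ_apply', hV.2 p hp, pow_succ', mul_assoc]
    exact M.abs_B_sub_B_le ih hp

theorem IsValue.tendstoUniformlyOn_iterate_B {V : ℝ → ℝ} (hV : M.IsValue V) :
    TendstoUniformlyOn (fun n => M.B^[n] 0) V atTop (Icc 0 1) := by
  obtain ⟨C, hC⟩ := hV.1
  have hgeo : Tendsto (fun n => M.β ^ n * C) atTop (𝓝 0) := by
    simpa using (tendsto_pow_atTop_nhds_zero_of_lt_one M.β_pos.le M.β_lt_one).mul_const C
  rw [Metric.tendstoUniformlyOn_iff]
  intro ε hε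
  filter_upwards [hgeo.eventually_lt_const hε] with n hn p hp
  rw [Real.dist_eq, abs_sub_comm]
  exact (hV.abs_iterate_B_sub_le hC n p hp).trans_lt hn

theorem IsValue.concaveOn {V : ℝ → ℝ} (hV : M.IsValue V) : ConcaveOn ℝ (Icc 0 1) V := by
  refine ConcaveOn.of_tendsto (fun n => ?_) fun p hp =>
    hV.tendstoUniformlyOn_iterate_B.tendsto_at hp
  induction n with
  | zero => exact concaveOn_const 0 (convex_Icc 0 1)
  | succ n ih => simpa only [Function.iterate_succ_apply'] using M.B_concaveOn ih

theorem IsValue.continuousOn {V : ℝ → ℝ} (hV : M.IsValue V) : ContinuousOn V (Icc 0 1) := by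
  refine hV.tendstoUniformlyOn_iterate_B.continuousOn
    (Frequently.of_forall fun n => Continuous.continuousOn ?_)
  induction n with
  | zero => exact continuous_const
  | succ n ih => simpa only [Function.iterate_succ_apply'] using M.B_continuous ih

theorem IsValue.convexOn_HPval_sub_LPval {V : ℝ → ℝ} (hV : M.IsValue V) :
    ConvexOn ℝ (Icc 0 1) (M.HPval V - M.LPval V) := by
  rw [HPval_eq_lineMap]
  exact (AffineMap.convexOn _ (convex_Icc 0 1)).sub (M.LPval_concaveOn hV.concaveOn)

theorem IsValue.continuousOn_HPval_sub_LPval {V : ℝ → ℝ} (hV : M.IsValue V) :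
    ContinuousOn (M.HPval V - M.LPval V) (Icc 0 1) := by
  have hVT : ContinuousOn (V ∘ M.T) (Icc 0 1) :=
    hV.continuousOn.comp (by unfold T; fun_prop) M.mapsTo_T
  rw [HPval_eq_lineMap]
  exact lineMap_continuous.continuousOn.sub
    (continuousOn_const.add (continuousOn_const.mul hVT))

end CouponModel

/-- There exists a threshold `τ ∈ [0,1]` for the value function: HP is optimal
on `[0,τ]` and LP is optimal on `[τ,1]`. -/
theorem exists_threshold (M : CouponModel) (V : ℝ → ℝ) (hV : M.IsValue V) :
    ∃ τ : ℝ, M.IsThreshold V τ := by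
  obtain ⟨τ, hτ, hHP, hLP⟩ := ConvexOn.exists_sign_change zero_le_one
    hV.convexOn_HPval_sub_LPval hV.continuousOn_HPval_sub_LPval
    (by rw [M.HPval_sub_LPval_zero]; linarith [M.CHN_le_CL])
    (by rw [M.HPval_sub_LPval_one]; linarith [M.CL_le_CHA])
  refine ⟨τ, hτ, fun p hp => ?_, fun p hp => ?_⟩
  · rw [hV.2 p ⟨hp.1, hp.2.trans hτ.2⟩, CouponModel.B_eq_inf]
    exact inf_eq_right.2 (sub_nonpos.1 (hHP p hp))
  · rw [hV.2 p ⟨hτ.1.trans hp.1, hp.2⟩, CouponModel.B_eq_inf]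
    exact inf_eq_left.2 (sub_nonneg.1 (hLP p hp))
end

section
/- If τ ∈ [0,1] is a threshold for V with λNA < τ and T(τ) ≥ τ, then V(λAA) = C_L/(1−β) and V(λNA) = ( (1−λNA)·C_HN + λNA·C_HA + β·λNA·C_L/(1−β) ) / ( 1 − β·(1−λNA) ). -/
/-! On `[τ, 1]` the low-privacy coupon is optimal, and `T` maps `[τ, 1]` into itself (it is
increasing with `T τ ≥ τ` and `T 1 = λAA ≤ 1`), so there the bounded `V` solves
`V = C_L + β · V ∘ T`. Each application of this equation multiplies the deviation
`V - C_L / (1 - β)` by `β`, so the deviation vanishes; as `τ ≤ T τ ≤ λAA`, this gives `V(λAA)`.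
At `λNA < τ` the high-privacy coupon is optimal, and its equation is linear in `V(λNA)`. -/

open Set Filter Topology

theorem eq_div_one_sub_of_eq_add_mul_comp {α : Type*} {S : Set α} {g : α → α}
    (hg : MapsTo g S S) {f : α → ℝ} {C : ℝ} (hC : ∀ p ∈ S, |f p| ≤ C) {a β : ℝ}
    (hβ : |β| < 1) (hf : ∀ p ∈ S, f p = a + β * f (g p)) :
    ∀ p ∈ S, f p = a / (1 - β) := by
  set c := a / (1 - β)
  have hc : c * (1 - β) = a := div_mul_cancel₀ a (by linarith [le_abs_self β])
  have hstep : ∀ p ∈ S, f p - c = β * (f (g p) - c) := fun p hp => by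
    rw [hf p hp]
    linear_combination -hc
  have hdecay : ∀ n : ℕ, ∀ p ∈ S, |f p - c| ≤ |β| ^ n * (C + |c|) := by
    intro n
    induction n with
    | zero => exact fun p hp => by simpa using (abs_sub _ _).trans (add_le_add_left (hC p hp) _)
    | succ n ih =>
      intro p hp
      rw [hstep p hp, abs_mul, pow_succ', mul_assoc]
      exact mul_le_mul_of_nonneg_left (ih _ (hg hp)) (abs_nonneg β)
  have hlim : Tendsto (fun n : ℕ => |β| ^ n * (C + |c|)) atTop (𝓝 0) := by
    simpa using (tendsto_pow_atTop_nhds_zero_of_lt_one (abs_nonneg β) hβ).mul_const (C + |c|)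
  intro p hp
  exact sub_eq_zero.mp (abs_nonpos_iff.mp (ge_of_tendsto' hlim fun n => hdecay n p hp))

namespace CouponModel

variable (M : CouponModel)

theorem monotone_T : Monotone M.T := fun p q hpq => by
  have := mul_nonneg (sub_nonneg.2 hpq) (sub_nonneg.2 M.lNA_le_lAA)
  simp only [T]
  linarith

theorem T_le_lAA {p : ℝ} (hp : p ≤ 1) : M.T p ≤ M.lAA := by
  have := mul_nonneg (sub_nonneg.2 hp) (sub_nonneg.2 M.lNA_le_lAA)
  simp only [T]
  linarith

theorem mapsTo_T_Icc {τ : ℝ} (hT : τ ≤ M.T τ) : MapsTo M.T (Icc τ 1) (Icc τ 1) :=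
  fun _ ⟨hτp, hp1⟩ => ⟨hT.trans (M.monotone_T hτp), (M.T_le_lAA hp1).trans M.lAA_le_one⟩

theorem one_sub_β_mul_one_sub_lNA_pos : 0 < 1 - M.β * (1 - M.lNA) := by
  have : M.β * (1 - M.lNA) ≤ M.β :=
    mul_le_of_le_one_right M.β_pos.le (by linarith [M.lNA_nonneg])
  linarith [M.β_lt_one]

theorem eq_CL_div_of_mem_Icc_threshold {V : ℝ → ℝ} (hV : IsBdd V) {τ : ℝ}
    (hτ : M.IsThreshold V τ) (hT : τ ≤ M.T τ) :
    ∀ p ∈ Icc τ 1, V p = M.CL / (1 - M.β) := by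
  obtain ⟨C, hC⟩ := hV
  have hβ : |M.β| < 1 := by rw [abs_of_pos M.β_pos]; exact M.β_lt_one
  exact eq_div_one_sub_of_eq_add_mul_comp (M.mapsTo_T_Icc hT)
    (fun p hp => hC p ⟨hτ.1.1.trans hp.1, hp.2⟩) hβ hτ.2.2

end CouponModel

/-- If `τ` is a threshold for `V` with `λNA < τ` and `T(τ) ≥ τ`, then
`V(λAA) = C_L/(1-β)` and
`V(λNA) = ((1-λNA)·C_HN + λNA·C_HA + β·λNA·C_L/(1-β)) / (1 - β·(1-λNA))`. -/
theorem value_at_transitions (M : CouponModel) (V : ℝ → ℝ) (hV : M.IsValue V)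
    (τ : ℝ) (hτ : M.IsThreshold V τ) (hlt : M.lNA < τ) (hT : τ ≤ M.T τ) :
    V M.lAA = M.CL / (1 - M.β) ∧
    V M.lNA = ((1 - M.lNA) * M.CHN + M.lNA * M.CHA
        + M.β * M.lNA * M.CL / (1 - M.β)) / (1 - M.β * (1 - M.lNA)) := by
  have hAA : V M.lAA = M.CL / (1 - M.β) :=
    M.eq_CL_div_of_mem_Icc_threshold hV.1 hτ hT M.lAA
      ⟨hT.trans (M.T_le_lAA hτ.1.2), M.lAA_le_one⟩
  refine ⟨hAA, ?_⟩
  have hNA : V M.lNA = M.HPval V M.lNA := hτ.2.1 M.lNA ⟨M.lNA_nonneg, hlt.le⟩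
  rw [CouponModel.HPval, hAA] at hNA
  rw [eq_div_iff M.one_sub_β_mul_one_sub_lNA_pos.ne']
  linear_combination hNA
end
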